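/- arXiv:1703.01360 — 3 statements merged into one kernel-verified Lean document; each statement's English description precedes it below -/
import Mathlib

section
/- For any 0 < ε < 1, 0 < δ < 1, κ > 1/2 with δ < κ, and all sufficiently large R > 1, there exists θ ∈ (0,1) such that for every y ∈ ℝ/ℤ and every a ∈ ℝ there is t ∈ R^δ·ℤ ∩ (a, a+R) with dist(y, t·θ mod 1) ≤ ε·R^{κ-1}. -/
/-!
Take an integer `K` just below `R^(1-δ)` and `θ = 1 / (R^δ K)`. Then `R^δ m θ = m / K` on the
circle depends only on `m mod K`, and since a window of length `R` contains more than `K`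
consecutive times `R^δ m`, every `K`-torsion point `j / K` is visited in every window. Every point
of the circle lies within `1 / (2K) ≈ R^(δ-1) / 2` of such a point, which is `≤ ε R^(κ-1)`
once `R^(κ-δ) ≥ 1/ε`.
-/

open Set Filter

namespace AddCircle

variable {p : ℝ}

lemma dist_coe_le_abs_sub (x z : ℝ) : dist (x : AddCircle p) z ≤ |x - z| := by
  rw [dist_eq_norm, ← coe_sub]
  exact QuotientAddGroup.norm_mk_le_norm

lemma exists_dist_coe_intCast_mul_le (hp : 0 < p) {K : ℕ} (hK : 0 < K) (y : AddCircle p) :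
    ∃ j : ℤ, dist y ↑(j * (p / K)) ≤ p / (2 * K) := by
  induction y using QuotientAddGroup.induction_on with
  | H x =>
  have hpK : 0 < p / K := by positivity
  refine ⟨round (x / (p / K)), (dist_coe_le_abs_sub _ _).trans ?_⟩
  calc |x - round (x / (p / K)) * (p / K)|
      = |(x / (p / K) - round (x / (p / K))) * (p / K)| := by
        rw [sub_mul, div_mul_cancel₀ _ hpK.ne']
    _ = |x / (p / K) - round (x / (p / K))| * (p / K) := by rw [abs_mul, abs_of_pos hpK]
    _ ≤ 1 / 2 * (p / K) := by gcongr; exact abs_sub_round _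
    _ = p / (2 * K) := by ring

lemma coe_intCast_mul_eq_of_modEq {K : ℕ} {m j : ℤ} (h : m ≡ j [ZMOD K]) :
    (↑(m * (p / K)) : AddCircle p) = ↑(j * (p / K)) := by
  obtain ⟨t, ht⟩ := h.dvd
  rcases eq_or_ne K 0 with rfl | hK
  · simp_all
  rw [eq_comm, ← sub_eq_zero, ← coe_sub, coe_eq_zero_iff]
  refine ⟨t, ?_⟩
  have ht' : (j : ℝ) - m = K * t := by exact_mod_cast ht
  rw [← sub_mul, ht', zsmul_eq_mul]
  field_simp

end AddCircle

lemma Int.exists_modEq_mul_mem_Ioo {K : ℕ} (hK : 0 < K) (j : ℤ) {s L : ℝ} (hs : 0 < s)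
    (hL : s * K < L) (a : ℝ) : ∃ m : ℤ, m ≡ j [ZMOD K] ∧ s * m ∈ Ioo a (a + L) := by
  set m₀ := ⌊a / s⌋ + 1
  have hr₀ : 0 ≤ (j - m₀) % K := Int.emod_nonneg _ (by exact_mod_cast hK.ne')
  have hrK : (j - m₀) % K < K := Int.emod_lt_of_pos _ (by exact_mod_cast hK)
  refine ⟨m₀ + (j - m₀) % K, ((Int.mod_modEq _ _).add_left m₀).trans (by rw [add_sub_cancel]),
    ?_, ?_⟩
  · have : a / s < m₀ := by simp [m₀, Int.lt_floor_add_one]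
    rw [div_lt_iff₀ hs] at this
    have : (0 : ℝ) ≤ ((j - m₀) % K : ℤ) := by exact_mod_cast hr₀
    push_cast
    nlinarith
  · have hfl : (⌊a / s⌋ : ℝ) * s ≤ a := (le_div_iff₀ hs).1 (Int.floor_le _)
    have : (((j - m₀) % K : ℤ) : ℝ) + 1 ≤ K := by exact_mod_cast hrK
    push_cast [m₀]
    nlinarith

theorem exists_rotation_window_dist_le {s R : ℝ} {K : ℕ} (hs : 0 < s) (h1 : 1 < s * K)
    (hR : s * K < R) :
    ∃ θ ∈ Ioo (0 : ℝ) 1, ∀ (y : AddCircle (1 : ℝ)) (a : ℝ), ∃ m : ℤ,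
      s * m ∈ Ioo a (a + R) ∧ dist y ↑(s * m * θ) ≤ 1 / (2 * K) := by
  have hK : 0 < K := Nat.pos_of_ne_zero (by rintro rfl; simp at h1; linarith)
  refine ⟨(s * K)⁻¹, ⟨by positivity, inv_lt_one_of_one_lt₀ h1⟩, fun y a => ?_⟩
  obtain ⟨j, hj⟩ := AddCircle.exists_dist_coe_intCast_mul_le one_pos hK y
  obtain ⟨m, hmj, hm⟩ := Int.exists_modEq_mul_mem_Ioo hK j hs hR a
  refine ⟨m, hm, ?_⟩
  have : s * m * (s * K)⁻¹ = m * (1 / K) := by field_simp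
  rwa [this, AddCircle.coe_intCast_mul_eq_of_modEq hmj]

lemma exists_nat_lt_le_add_one {x : ℝ} (hx : 0 < x) : ∃ K : ℕ, (K : ℝ) < x ∧ x ≤ K + 1 := by
  refine ⟨⌈x⌉₊ - 1, ?_, ?_⟩ <;> rw [Nat.cast_pred (Nat.ceil_pos.2 hx)]
  · linarith [Nat.ceil_lt_add_one hx.le]
  · linarith [Nat.le_ceil x]

theorem eventually_exists_rotation_window_dist_le {ε δ κ : ℝ} (hε : 0 < ε) (hδ : δ < 1)
    (hδκ : δ < κ) :
    ∀ᶠ R in atTop, ∃ θ ∈ Ioo (0 : ℝ) 1, ∀ (y : AddCircle (1 : ℝ)) (a : ℝ), ∃ m : ℤ,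
      R ^ δ * m ∈ Ioo a (a + R) ∧ dist y ↑(R ^ δ * m * θ) ≤ ε * R ^ (κ - 1) := by
  filter_upwards [eventually_gt_atTop 2,
    (tendsto_rpow_atTop (sub_pos.2 hδ)).eventually_ge_atTop 2,
    (tendsto_rpow_atTop (sub_pos.2 hδκ)).eventually_ge_atTop ε⁻¹] with R hR2 hRK hRε
  have hR : 0 < R := by linarith
  obtain ⟨K, hKlt, hKle⟩ := exists_nat_lt_le_add_one (show 0 < R ^ (1 - δ) by positivity)
  have h2K : R ^ (1 - δ) ≤ 2 * K := by linarith
  have hK : (0 : ℝ) < K := by linarith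
  have hsplit : R ^ δ * R ^ (1 - δ) = R := by rw [← Real.rpow_add hR]; simp
  have hsmall : 1 / (2 * K) ≤ ε * R ^ (κ - 1) := by
    have hsplit' : R ^ (κ - 1) * R ^ (1 - δ) = R ^ (κ - δ) := by rw [← Real.rpow_add hR]; ring_nf
    have : 1 ≤ ε * R ^ (κ - 1) * (2 * K) := by
      calc 1 ≤ ε * R ^ (κ - δ) := by rwa [← inv_le_iff_one_le_mul₀' hε]
        _ = ε * R ^ (κ - 1) * R ^ (1 - δ) := by rw [mul_assoc, hsplit']
        _ ≤ ε * R ^ (κ - 1) * (2 * K) := by gcongr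
    rwa [div_le_iff₀ (by positivity)]
  have hRδ : 0 < R ^ δ := by positivity
  obtain ⟨θ, hθ, hθy⟩ := exists_rotation_window_dist_le hRδ
    (by nlinarith [mul_le_mul_of_nonneg_left h2K hRδ.le] : 1 < R ^ δ * K)
    (by nlinarith [mul_lt_mul_of_pos_left hKlt hRδ] : R ^ δ * K < R)
  exact ⟨θ, hθ, fun y a => (hθy y a).imp fun _ hm => ⟨hm.1, hm.2.trans hsmall⟩⟩

theorem ergodic_lemma_d1_general (ε δ κ : ℝ) (hε0 : 0 < ε)
    (hδ1 : δ < 1) (hδκ : δ < κ) :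
    ∃ R₀ : ℝ, 1 < R₀ ∧ ∀ R : ℝ, R₀ ≤ R →
      ∃ θ : ℝ, θ ∈ Ioo (0 : ℝ) 1 ∧
        ∀ (y : AddCircle (1 : ℝ)) (a : ℝ), ∃ m : ℤ,
          R ^ δ * m ∈ Ioo a (a + R) ∧
          dist y ((↑(R ^ δ * m * θ) : AddCircle (1 : ℝ))) ≤ ε * R ^ (κ - 1) := by
  obtain ⟨R₀, hR₀⟩ := ((eventually_exists_rotation_window_dist_le hε0 hδ1 hδκ).and
    (eventually_gt_atTop 1)).exists_forall_of_atTop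
  exact ⟨R₀, (hR₀ R₀ le_rfl).2, fun R hR => (hR₀ R hR).1⟩

/-- Quantitative ergodic lemma, `d = 1` case: for `0 < ε, δ < 1`, `κ > 1/2`, `δ < κ` and all
sufficiently large `R > 1`, there is `θ ∈ (0,1)` such that for every point `y` of the circle
`ℝ/ℤ` and every `a ∈ ℝ`, some time `t = R^δ · m ∈ (a, a+R)` satisfies
`dist(y, t·θ) ≤ ε · R^(κ-1)` on the circle. -/
theorem ergodic_lemma_d1 (ε δ κ : ℝ) (hε0 : 0 < ε) (hε1 : ε < 1)
    (hδ0 : 0 < δ) (hδ1 : δ < 1) (hκ : 1 / 2 < κ) (hδκ : δ < κ) :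
    ∃ R₀ : ℝ, 1 < R₀ ∧ ∀ R : ℝ, R₀ ≤ R →
      ∃ θ : ℝ, θ ∈ Ioo (0 : ℝ) 1 ∧
        ∀ (y : AddCircle (1 : ℝ)) (a : ℝ), ∃ m : ℤ,
          R ^ δ * m ∈ Ioo a (a + R) ∧
          dist y ((↑(R ^ δ * m * θ) : AddCircle (1 : ℝ))) ≤ ε * R ^ (κ - 1) :=
  ergodic_lemma_d1_general ε δ κ hε0 hδ1 hδκ
end

section
/- Let 0 < δ < κ < 1. If θ ∈ (0,1) satisfies |θ - 1/R| ≤ R^{-2}, and R is sufficiently large (in particular R^{δ-κ} < ε), then for every y ∈ ℝ/ℤ there exists an integer m with t = R^δ·m ∈ (0, R) and dist(y, t·θ mod 1) ≤ ε·R^{κ-1}. -/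
/-!
Put `a = R ^ (δ - 1)`. The points `R ^ δ * m * θ` are the multiples `m * s` of the step
`s = a * (R * θ)`, and `|R * θ - 1| ≤ a`. The multiples with `1 ≤ m < a⁻¹` walk through
`[0, 1)` in steps `s ≤ 2 * a` and stop within `2 * a` of `1`, so they are `2 * a`-dense on the
circle; finally `2 * a ≤ ε * R ^ (κ - 1)` once `R ^ (κ - δ) ≥ 2 / ε`.
-/

open Set

theorem exists_abs_sub_intCast_mul_le {z s : ℝ} (hz : 0 ≤ z) (hs : 0 < s) {M : ℤ} (hM : 1 ≤ M) :
    ∃ m ∈ Icc 1 M, |z - m * s| ≤ max s (z - M * s) := by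
  obtain ⟨hk0, hks⟩ : 0 ≤ ⌊z / s⌋ ∧ z < (⌊z / s⌋ + 1) * s :=
    ⟨Int.floor_nonneg.mpr (by positivity), (div_lt_iff₀ hs).mp (Int.lt_floor_add_one _)⟩
  rcases le_or_gt (⌊z / s⌋ + 1) M with hkM | hMk
  · refine ⟨⌊z / s⌋ + 1, ⟨by omega, hkM⟩, le_max_of_le_left ?_⟩
    have hkz : ⌊z / s⌋ * s ≤ z := (le_div_iff₀ hs).mp (Int.floor_le _)
    push_cast
    rw [abs_le]
    constructor <;> linarith
  · refine ⟨M, ⟨hM, le_rfl⟩, le_max_of_le_right (le_of_eq (abs_of_nonneg ?_))⟩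
    have : (M : ℝ) ≤ ⌊z / s⌋ := by exact_mod_cast Int.le_of_lt_add_one hMk
    have hMz : M * s ≤ z := (le_div_iff₀ hs).mp (this.trans (Int.floor_le _))
    linarith

theorem AddCircle.exists_dist_coe_intCast_mul_le_s1 {p s : ℝ} [Fact (0 < p)] (hs : 0 < s) {M : ℤ}
    (hM : 1 ≤ M) (y : AddCircle p) :
    ∃ m ∈ Icc 1 M, dist y ↑(m * s) ≤ max s (p - M * s) := by
  obtain ⟨⟨z, hz0, hzp⟩, rfl⟩ := (AddCircle.equivIco p 0).symm.surjective y
  obtain ⟨m, hm, hzm⟩ := exists_abs_sub_intCast_mul_le hz0 hs hM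
  refine ⟨m, hm, ?_⟩
  calc dist (((AddCircle.equivIco p 0).symm ⟨z, hz0, hzp⟩ : AddCircle p)) ↑(m * s)
      = ‖((z - m * s : ℝ) : AddCircle p)‖ := by rw [dist_eq_norm]; rfl
    _ ≤ |z - m * s| := QuotientAddGroup.norm_mk_le_norm
    _ ≤ max s (p - M * s) := hzm.trans (max_le_max_left _ (by linarith [zero_add p]))

theorem max_mul_one_sub_mul_le {a u M : ℝ} (ha0 : 0 < a) (ha1 : a ≤ 1) (hu : |u - 1| ≤ a)
    (hM : a⁻¹ - 1 ≤ M) : max (a * u) (1 - M * (a * u)) ≤ 2 * a := by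
  obtain ⟨hu₁, hu₂⟩ := abs_le.mp hu
  have hMa : 1 - a ≤ M * a := by
    have := mul_le_mul_of_nonneg_right hM ha0.le
    rwa [sub_mul, inv_mul_cancel₀ ha0.ne', one_mul] at this
  refine max_le (by nlinarith) ?_
  nlinarith [mul_le_mul hMa (by linarith : 1 - a ≤ u) (by linarith) (by linarith)]

theorem AddCircle.exists_dist_coe_intCast_mul_le_two_mul {a u : ℝ} (ha0 : 0 < a) (ha1 : a < 1)
    (hu : |u - 1| ≤ a) (y : AddCircle (1 : ℝ)) :
    ∃ m : ℤ, 1 ≤ m ∧ a * m < 1 ∧ dist y ↑(m * (a * u)) ≤ 2 * a := by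
  set M : ℤ := ⌈a⁻¹⌉ - 1
  have hM1 : 1 ≤ M := by
    have : (1 : ℤ) < ⌈a⁻¹⌉ := Int.lt_ceil.mpr (by exact_mod_cast (one_lt_inv₀ ha0).mpr ha1)
    omega
  have hMge : a⁻¹ - 1 ≤ M := by push_cast [M]; linarith [Int.le_ceil a⁻¹]
  have hMlt : a * M < 1 := by
    calc a * M < a * a⁻¹ := by gcongr; push_cast [M]; linarith [Int.ceil_lt_add_one a⁻¹]
      _ = 1 := mul_inv_cancel₀ ha0.ne'
  have hs : 0 < a * u := mul_pos ha0 (by linarith [abs_le.mp hu])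
  obtain ⟨m, ⟨hm1, hmM⟩, hdist⟩ := AddCircle.exists_dist_coe_intCast_mul_le_s1 hs hM1 y
  exact ⟨m, hm1, (mul_le_mul_of_nonneg_left (Int.cast_le.mpr hmM) ha0.le).trans_lt hMlt,
    hdist.trans (max_mul_one_sub_mul_le ha0 ha1.le hu hMge)⟩

theorem abs_mul_sub_one_le_rpow_sub_one {R θ δ : ℝ} (hR : 1 ≤ R) (hδ : 0 ≤ δ)
    (hθ : |θ - 1 / R| ≤ R ^ (-2 : ℝ)) : |R * θ - 1| ≤ R ^ (δ - 1) := by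
  have hR0 : 0 < R := by linarith
  calc |R * θ - 1| = R * |θ - 1 / R| := by
        rw [← abs_of_pos hR0, ← abs_mul, abs_of_pos hR0, mul_sub, mul_one_div_cancel hR0.ne']
    _ ≤ R * R ^ (-2 : ℝ) := by gcongr
    _ = R ^ (-1 : ℝ) := by
        rw [← Real.rpow_one_add' hR0.le (by norm_num)]; norm_num
    _ ≤ R ^ (δ - 1) := Real.rpow_le_rpow_of_exponent_le hR (by linarith)

theorem Real.rpow_le_mul_rpow_of_rpow_inv_le {R c β γ : ℝ} (hc : 0 < c) (hβγ : β < γ)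
    (hR : c⁻¹ ^ (γ - β)⁻¹ ≤ R) : R ^ β ≤ c * R ^ γ := by
  have hR0 : 0 < R := (Real.rpow_pos_of_pos (inv_pos.mpr hc) _).trans_le hR
  have hgap : c⁻¹ ≤ R ^ (γ - β) :=
    (Real.rpow_inv_le_iff_of_pos (inv_pos.mpr hc).le hR0.le (sub_pos.mpr hβγ)).mp hR
  calc R ^ β = c * c⁻¹ * R ^ β := by rw [mul_inv_cancel₀ hc.ne', one_mul]
    _ ≤ c * R ^ (γ - β) * R ^ β := by gcongr
    _ = c * R ^ γ := by rw [mul_assoc, ← Real.rpow_add hR0, sub_add_cancel]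

/-- If `0 < δ < κ < 1`, `θ ∈ (0,1)` satisfies `|θ - 1/R| ≤ R⁻²`, and `R` is sufficiently
large (in particular `R^(δ-κ) < ε`), then for every `y` on the circle `ℝ/ℤ` there is an
integer `m` with `t = R^δ·m ∈ (0, R)` and `dist(y, t·θ) ≤ ε·R^(κ-1)`. -/
theorem circle_equispaced_dense (ε δ κ : ℝ) (hε0 : 0 < ε)
    (hδ0 : 0 < δ) (hδκ : δ < κ) (hκ1 : κ < 1) :
    ∃ R₀ : ℝ, 1 < R₀ ∧ ∀ R : ℝ, R₀ ≤ R → R ^ (δ - κ) < ε →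
      ∀ θ : ℝ, θ ∈ Ioo (0 : ℝ) 1 → |θ - 1 / R| ≤ R ^ (-2 : ℝ) →
        ∀ y : AddCircle (1 : ℝ), ∃ m : ℤ,
          R ^ δ * m ∈ Ioo (0 : ℝ) R ∧
          dist y ((↑(R ^ δ * m * θ) : AddCircle (1 : ℝ))) ≤ ε * R ^ (κ - 1) := by
  refine ⟨max 2 ((ε / 2)⁻¹ ^ ((κ - 1) - (δ - 1))⁻¹), by simp, fun R hR _ θ _ hθ y => ?_⟩
  have hR1 : 1 < R := by linarith [le_max_left 2 ((ε / 2)⁻¹ ^ ((κ - 1) - (δ - 1))⁻¹)]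
  have hR0 : 0 < R := by linarith
  have hRδ : R ^ δ = R ^ (δ - 1) * R := by
    rw [Real.rpow_sub_one hR0.ne', div_mul_cancel₀ _ hR0.ne']
  have hε : R ^ (δ - 1) ≤ ε / 2 * R ^ (κ - 1) :=
    Real.rpow_le_mul_rpow_of_rpow_inv_le (half_pos hε0) (by linarith) (le_of_max_le_right hR)
  obtain ⟨m, hm1, hma, hdist⟩ := AddCircle.exists_dist_coe_intCast_mul_le_two_mul
    (Real.rpow_pos_of_pos hR0 _) (Real.rpow_lt_one_of_one_lt_of_neg hR1 (by linarith))
    (abs_mul_sub_one_le_rpow_sub_one hR1.le hδ0.le hθ) y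
  refine ⟨m, ⟨by positivity, ?_⟩, ?_⟩
  · calc R ^ δ * m = R * (R ^ (δ - 1) * m) := by rw [hRδ]; ring
      _ < R * 1 := by gcongr
      _ = R := mul_one R
  · calc dist y ↑(R ^ δ * m * θ) = dist y ↑(m * (R ^ (δ - 1) * (R * θ))) := by rw [hRδ]; ring_nf
      _ ≤ 2 * R ^ (δ - 1) := hdist
      _ ≤ ε * R ^ (κ - 1) := by linarith
end

section
/- Let φ be the Schwartz function on ℝ whose Fourier transform is the indicator of (-ρ, ρ) for a sufficiently small constant ρ > 0, let R > 4, and set u(x₁,t) = (2π)^{-1/2} ∫_ℝ \widehat φ(R^{-1/2}(ξ - πR)) e^{i x₁ ξ - i t ξ²/(2πR)} dξ · R^{-1/2}. Then there exist absolute constants c, C > 0 (independent of R) such that c ≤ |u(x₁,t)| ≤ C whenever |t| ≤ 1 and |x₁ - t| ≤ R^{-1/2}. -/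
/-!
Substituting `ξ = πR + √R y` turns `u` into `(2π)^{-1/2} e^{ic} ∫_{-ρ}^{ρ} e^{iφ(y)} dy`
with the real phase `φ(y) = √R (x₁ - t) y - t y² / (2π)`. Under the hypotheses `|φ| ≤ 1`
on `[-ρ, ρ]` once `ρ ≤ 1/2`, so `cos φ ≥ 1/2` there: the real part of the integral is at
least `ρ`, while its modulus is trivially at most `2ρ`.
-/

open Real Set

/-- The solution `u(x₁,t) = (2π)^{-1/2} R^{-1/2} ∫ φ̂(R^{-1/2}(ξ-πR)) e^{i x₁ ξ - i t ξ²/(2πR)} dξ`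
with `φ̂ = χ_{(-ρ,ρ)}`. -/
noncomputable def dkSol (ρ R x₁ t : ℝ) : ℂ :=
  (((2 * Real.pi) ^ (-(1 / 2 : ℝ)) * R ^ (-(1 / 2 : ℝ)) : ℝ) : ℂ) *
    ∫ ξ : ℝ, (Set.Ioo (-ρ) ρ).indicator (fun _ => (1 : ℂ)) (R ^ (-(1 / 2 : ℝ)) * (ξ - Real.pi * R))
      * Complex.exp (Complex.I * ((x₁ * ξ - t * ξ ^ 2 / (2 * Real.pi * R) : ℝ) : ℂ))

open MeasureTheory

theorem integral_indicator_comp_affine_mul {s : Set ℝ} (hs : MeasurableSet s) {c r : ℝ}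
    (hr : 0 < r) (g : ℝ → ℂ) :
    ∫ ξ, s.indicator (fun _ => (1 : ℂ)) (r⁻¹ * (ξ - c)) * g ξ =
      r * ∫ y in s, g (c + r * y) := by
  have hg : ∀ ξ, s.indicator (fun _ => (1 : ℂ)) (r⁻¹ * (ξ - c)) * g ξ
      = s.indicator (fun y => g (c + r * y)) ((ξ - c) / r) := by
    intro ξ
    rw [inv_mul_eq_div]
    by_cases h : (ξ - c) / r ∈ s <;> simp [h, mul_div_cancel₀ _ hr.ne']
  simp_rw [hg]
  rw [integral_sub_right_eq_self (fun ξ => s.indicator (fun y => g (c + r * y)) (ξ / r)) c,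
    Measure.integral_comp_div, abs_of_pos hr, integral_indicator hs, Complex.real_smul]

noncomputable def dkPhase (R x₁ t y : ℝ) : ℝ := √R * (x₁ - t) * y - t * y ^ 2 / (2 * π)

theorem continuous_dkPhase (R x₁ t : ℝ) : Continuous (dkPhase R x₁ t) := by
  unfold dkPhase
  fun_prop

theorem dkSol_phase_eq {R : ℝ} (hR : 0 < R) (x₁ t y : ℝ) :
    x₁ * (π * R + √R * y) - t * (π * R + √R * y) ^ 2 / (2 * π * R)
      = (x₁ * π * R - t * π * R / 2) + dkPhase R x₁ t y := by
  unfold dkPhase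
  have hs : √R ^ 2 = R := sq_sqrt hR.le
  field_simp
  linear_combination (-(t * y ^ 2)) * hs

theorem norm_dkSol_eq {ρ R : ℝ} (hρ : 0 ≤ ρ) (hR : 0 < R) (x₁ t : ℝ) :
    ‖dkSol ρ R x₁ t‖ = (2 * π) ^ (-(1 / 2 : ℝ)) *
      ‖∫ y in -ρ..ρ, Complex.exp (dkPhase R x₁ t y * Complex.I)‖ := by
  have hsR : 0 < √R := sqrt_pos.mpr hR
  have hRinv : R ^ (-(1 / 2 : ℝ)) = (√R)⁻¹ := by rw [rpow_neg hR.le, sqrt_eq_rpow]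
  have hexp : ∀ y : ℝ, Complex.exp (Complex.I *
      ((x₁ * (π * R + √R * y) - t * (π * R + √R * y) ^ 2 / (2 * π * R) : ℝ) : ℂ))
      = Complex.exp ((x₁ * π * R - t * π * R / 2 : ℝ) * Complex.I) *
        Complex.exp (dkPhase R x₁ t y * Complex.I) := by
    intro y
    rw [dkSol_phase_eq hR, ← Complex.exp_add]
    congr 1
    push_cast
    ring
  rw [dkSol, hRinv, integral_indicator_comp_affine_mul measurableSet_Ioo hsR]
  simp_rw [hexp]
  rw [integral_const_mul, ← integral_Ioc_eq_integral_Ioo,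
    ← intervalIntegral.integral_of_le (by linarith), norm_mul, norm_mul, norm_mul,
    Complex.norm_exp_ofReal_mul_I, Complex.norm_real, norm_of_nonneg (by positivity),
    Complex.norm_real, norm_of_nonneg hsR.le, one_mul, mul_assoc, inv_mul_cancel_left₀ hsR.ne']

theorem norm_intervalIntegral_exp_mul_I_le (f : ℝ → ℝ) (a b : ℝ) :
    ‖∫ x in a..b, Complex.exp (f x * Complex.I)‖ ≤ |b - a| := by
  simpa using intervalIntegral.norm_integral_le_of_norm_le_const (C := 1)
    fun x _ => (Complex.norm_exp_ofReal_mul_I (f x)).le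

theorem sub_div_two_le_norm_intervalIntegral_exp_mul_I {f : ℝ → ℝ} {a b : ℝ} (hab : a ≤ b)
    (hf : Continuous f) (hf1 : ∀ x ∈ Icc a b, |f x| ≤ 1) :
    (b - a) / 2 ≤ ‖∫ x in a..b, Complex.exp (f x * Complex.I)‖ := by
  have hcos : ∀ x ∈ Icc a b, 1 / 2 ≤ cos (f x) := fun x hx => by
    nlinarith [one_sub_sq_div_two_le_cos (x := f x), abs_le.mp (hf1 x hx)]
  have hint : IntervalIntegrable (fun x => Complex.exp (f x * Complex.I)) volume a b :=
    (by fun_prop : Continuous fun x => Complex.exp (f x * Complex.I)).intervalIntegrable a b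
  calc (b - a) / 2 = ∫ _ in a..b, (1 / 2 : ℝ) := by simp; ring
    _ ≤ ∫ x in a..b, cos (f x) :=
      intervalIntegral.integral_mono_on hab intervalIntegrable_const
        ((continuous_cos.comp hf).intervalIntegrable a b) hcos
    _ = (∫ x in a..b, Complex.exp (f x * Complex.I)).re := by
      simp_rw [← Complex.exp_ofReal_mul_I_re]
      exact intervalIntegral.intervalIntegral_re hint
    _ ≤ _ := Complex.re_le_norm _

theorem abs_mul_sub_mul_sq_div_le_one {a t y : ℝ} (ha : |a| ≤ 1) (ht : |t| ≤ 1)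
    (hy : |y| ≤ 1 / 2) : |a * y - t * y ^ 2 / (2 * π)| ≤ 1 := by
  have hay : |a * y| ≤ 1 / 2 := by
    rw [abs_mul]; nlinarith [abs_nonneg a, abs_nonneg y]
  have hty : |t * y ^ 2 / (2 * π)| ≤ 1 / 2 := by
    rw [abs_div, abs_mul, abs_pow, abs_of_pos (by positivity : 0 < 2 * π),
      div_le_iff₀ (by positivity)]
    nlinarith [abs_nonneg t, abs_nonneg y, pi_gt_three]
  calc _ ≤ |a * y| + |t * y ^ 2 / (2 * π)| := abs_sub _ _
    _ ≤ 1 := by linarith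

theorem dkSol_norm_bounds {ρ R x₁ t : ℝ} (hρ : 0 ≤ ρ) (hρ' : ρ ≤ 1 / 2) (hR : 0 < R)
    (ht : |t| ≤ 1) (hx : |x₁ - t| ≤ R ^ (-(1 / 2 : ℝ))) :
    (2 * π) ^ (-(1 / 2 : ℝ)) * ρ ≤ ‖dkSol ρ R x₁ t‖ ∧
      ‖dkSol ρ R x₁ t‖ ≤ (2 * π) ^ (-(1 / 2 : ℝ)) * (2 * ρ) := by
  have hsR : 0 < √R := sqrt_pos.mpr hR
  have hx' : |√R * (x₁ - t)| ≤ 1 := by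
    rw [rpow_neg hR.le, ← sqrt_eq_rpow] at hx
    calc |√R * (x₁ - t)| = √R * |x₁ - t| := by rw [abs_mul, abs_of_pos hsR]
      _ ≤ √R * (√R)⁻¹ := by gcongr
      _ = 1 := mul_inv_cancel₀ hsR.ne'
  have hphase : ∀ y ∈ Icc (-ρ) ρ, |dkPhase R x₁ t y| ≤ 1 := fun y hy =>
    abs_mul_sub_mul_sq_div_le_one hx' ht (abs_le.mpr ⟨by linarith [hy.1], by linarith [hy.2]⟩)
  rw [norm_dkSol_eq hρ hR]
  constructor
  · calc (2 * π) ^ (-(1 / 2 : ℝ)) * ρ = (2 * π) ^ (-(1 / 2 : ℝ)) * ((ρ - -ρ) / 2) := by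
          ring
      _ ≤ _ := by
        gcongr
        exact sub_div_two_le_norm_intervalIntegral_exp_mul_I (by linarith)
          (continuous_dkPhase R x₁ t) hphase
  · calc _ ≤ (2 * π) ^ (-(1 / 2 : ℝ)) * |ρ - -ρ| := by
          gcongr
          exact norm_intervalIntegral_exp_mul_I_le _ _ _
      _ = _ := by rw [abs_of_nonneg (by linarith)]; ring

/-- Dahlberg–Kenig computation: for `ρ` a sufficiently small constant there are constants
`c, C > 0` independent of `R` such that `c ≤ |u(x₁,t)| ≤ C` whenever `R > 4`, `|t| ≤ 1` and
`|x₁ - t| ≤ R^{-1/2}`. -/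
theorem dkSol_size : ∃ ρ₀ : ℝ, 0 < ρ₀ ∧ ∀ ρ : ℝ, 0 < ρ → ρ ≤ ρ₀ →
    ∃ c C : ℝ, 0 < c ∧ 0 < C ∧ ∀ R x₁ t : ℝ, 4 < R → |t| ≤ 1 → |x₁ - t| ≤ R ^ (-(1 / 2 : ℝ)) →
      c ≤ ‖dkSol ρ R x₁ t‖ ∧ ‖dkSol ρ R x₁ t‖ ≤ C :=
  ⟨1 / 2, by norm_num, fun ρ hρ hρ' => ⟨_, _, by positivity, by positivity,
    fun _ _ _ hR ht hx => dkSol_norm_bounds hρ.le hρ' (by linarith) ht hx⟩⟩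
end
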